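/- arXiv:2510.02928 — 4 statements merged into one kernel-verified Lean document; each statement's English description precedes it below -/
import Mathlib

section
/- Let c > 0 be constant, let h : ℝ₊ → ℝ be continuous, and let g satisfy g'(ρ) = ρ·h(ρ). Define ρ(x,y) = ‖(x,y) − (x₀,y₀)‖, v(x,y) = −h(ρ(x,y))·((x−x₀, y−y₀))⊥ and p(x,y) = P₀ − c·g(ρ(x,y)). Then away from (x₀,y₀), (v, p) is a stationary solution of the acoustic system with pure Coriolis source: ∇p = c·v⊥ and ∇·v = 0. -/
/-!
Write `r = ρ(x,y) > 0`. By the chain rule every radial profile `f ∘ ρ` has partial derivatives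
`f'(r) (x - x₀) / r` and `f'(r) (y - y₀) / r`. For `p` the relation `g'(r) = r h(r)` cancels
the `1 / r` and gives `∇p = -c h(r) (x - x₀, y - y₀) = c v⊥`; for `v` the two terms of the
divergence are `± h'(r) (x - x₀)(y - y₀) / r` and cancel.
-/

open Real

theorem sq_sub_add_sq_sub_ne_zero {x y x₀ y₀ : ℝ} (hxy : (x, y) ≠ (x₀, y₀)) :
    (x - x₀) ^ 2 + (y - y₀) ^ 2 ≠ 0 := by
  contrapose! hxy
  obtain ⟨hx, hy⟩ := (add_eq_zero_iff_of_nonneg (sq_nonneg _) (sq_nonneg _)).mp hxy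
  rw [sq_eq_zero_iff, sub_eq_zero] at hx hy
  rw [hx, hy]

theorem HasDerivAt.comp_sqrt_sub_sq_add {f : ℝ → ℝ} {f' a b x : ℝ} (hx : (x - a) ^ 2 + b ≠ 0)
    (hf : HasDerivAt f f' √((x - a) ^ 2 + b)) :
    HasDerivAt (fun t => f √((t - a) ^ 2 + b)) (f' * ((x - a) / √((x - a) ^ 2 + b))) x := by
  have hsq : HasDerivAt (fun t => (t - a) ^ 2 + b) (2 * (x - a)) x := by
    simpa [mul_comm] using (((hasDerivAt_id x).sub_const a).pow 2).add_const b
  refine hf.comp x (((hasDerivAt_sqrt hx).comp x hsq).congr_deriv ?_)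
  field_simp

theorem HasDerivAt.comp_sqrt_add_sq_sub {f : ℝ → ℝ} {f' a b x : ℝ} (hx : b + (x - a) ^ 2 ≠ 0)
    (hf : HasDerivAt f f' √(b + (x - a) ^ 2)) :
    HasDerivAt (fun t => f √(b + (t - a) ^ 2)) (f' * ((x - a) / √(b + (x - a) ^ 2))) x := by
  simp only [add_comm b] at hx hf ⊢
  exact hf.comp_sqrt_sub_sq_add hx

theorem stmt3_general
    (c P₀ x₀ y₀ : ℝ)
    (h g : ℝ → ℝ)
    (hh : ContDiff ℝ 1 h)
    (hg : ∀ ρ : ℝ, 0 < ρ → HasDerivAt g (ρ * h ρ) ρ)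
    (ρ : ℝ → ℝ → ℝ) (hρ : ∀ x y, ρ x y = Real.sqrt ((x - x₀) ^ 2 + (y - y₀) ^ 2))
    (v₁ v₂ p : ℝ → ℝ → ℝ)
    (hv₁ : ∀ x y, v₁ x y = h (ρ x y) * (y - y₀))
    (hv₂ : ∀ x y, v₂ x y = -(h (ρ x y) * (x - x₀)))
    (hp : ∀ x y, p x y = P₀ - c * g (ρ x y)) :
    ∀ x y : ℝ, (x, y) ≠ (x₀, y₀) →
      deriv (fun x' => p x' y) x = c * v₂ x y ∧
      deriv (fun y' => p x y') y = -(c * v₁ x y) ∧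
      deriv (fun x' => v₁ x' y) x + deriv (fun y' => v₂ x y') y = 0 := by
  intro x y hxy
  simp only [hp, hv₁, hv₂, hρ]
  have hne := sq_sub_add_sq_sub_ne_zero hxy
  have hr : 0 < √((x - x₀) ^ 2 + (y - y₀) ^ 2) := sqrt_pos.mpr (hne.symm.lt_of_le (by positivity))
  have hg_r := hg _ hr
  have hh_r := (hh.differentiable one_ne_zero (√((x - x₀) ^ 2 + (y - y₀) ^ 2))).hasDerivAt
  have hgx := hg_r.comp_sqrt_sub_sq_add hne
  have hgy := hg_r.comp_sqrt_add_sq_sub hne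
  have hhx := hh_r.comp_sqrt_sub_sq_add hne
  have hhy := hh_r.comp_sqrt_add_sq_sub hne
  refine ⟨((hgx.const_mul c).const_sub P₀).deriv.trans ?_,
    ((hgy.const_mul c).const_sub P₀).deriv.trans ?_, ?_⟩
  · field_simp
  · field_simp
  · rw [(hhx.mul_const (y - y₀)).deriv, (hhy.mul_const (x - x₀)).fun_neg.deriv]
    ring

/-- Steady vortex with a pure (constant) Coriolis source: with `ρ(x,y) = ‖(x,y) − (x₀,y₀)‖`,
`g'(ρ) = ρ h(ρ)`, velocity `v = (h(ρ)(y−y₀), −h(ρ)(x−x₀))` (i.e. `v = −h(ρ)·(x−x₀,y−y₀)⊥`)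
and pressure `p = P₀ − c g(ρ)`, the pair `(v, p)` is, away from the center, a stationary
solution of the acoustic system with Coriolis source:
`∇p = c v⊥` (componentwise `∂_x p = c v₂`, `∂_y p = −c v₁`, with `w⊥ = (w₂,−w₁)`)
and `∇·v = 0`. -/
theorem stmt3
    (c P₀ x₀ y₀ : ℝ) (hc : 0 < c)
    (h g : ℝ → ℝ)
    (hh : ContDiff ℝ 1 h)
    (hg : ∀ ρ : ℝ, 0 < ρ → HasDerivAt g (ρ * h ρ) ρ)
    (ρ : ℝ → ℝ → ℝ) (hρ : ∀ x y, ρ x y = Real.sqrt ((x - x₀) ^ 2 + (y - y₀) ^ 2))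
    (v₁ v₂ p : ℝ → ℝ → ℝ)
    (hv₁ : ∀ x y, v₁ x y = h (ρ x y) * (y - y₀))
    (hv₂ : ∀ x y, v₂ x y = -(h (ρ x y) * (x - x₀)))
    (hp : ∀ x y, p x y = P₀ - c * g (ρ x y)) :
    ∀ x y : ℝ, (x, y) ≠ (x₀, y₀) →
      deriv (fun x' => p x' y) x = c * v₂ x y ∧
      deriv (fun y' => p x y') y = -(c * v₁ x y) ∧
      deriv (fun x' => v₁ x' y) x + deriv (fun y' => v₂ x y') y = 0 :=
  stmt3_general c P₀ x₀ y₀ h g hh hg ρ hρ v₁ v₂ p hv₁ hv₂ hp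
end

section
/- Let M, D_x, I_x be matrices indexed by nodes of a 1D continuous finite element space, and similarly in y, and suppose vectors σˣ, σʸ, σ_u, σ_v depend only on the x-index resp. y-index (i.e., (σˣ)_{i,p;j,ℓ} is independent of (j,ℓ) and (σʸ)_{i,p;j,ℓ} independent of (i,p)). Then (D_x ⊗ D_y)(σˣ + σʸ) = 0, (D_x ⊗ 1_y) σʸ = 0, and (1_x ⊗ D_y) σˣ = 0, where D_x is any matrix annihilating constant vectors (D_x 𝟙 = 0) and 1 denotes the identity. Consequently, any nodal data (u, v, p) satisfying p − K_u = σ_u(y-only), p − K_v = σ_v(x-only), and U + V − K_p = σˣ(x-only) + σʸ(y-only) lies in the kernel of the spatial operator of the global-flux Galerkin scheme: D_x ⊗ M_y (p − K_u) = 0, M_x ⊗ D_y (p − K_v) = 0, and D_x ⊗ D_y (U + V − K_p) = 0. -/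
/-! The Kronecker product acts on separable vectors factorwise, `(A ⊗ B)(f ⊗ g) = Af ⊗ Bg`.
A vector depending on one direction only is `𝟙 ⊗ g` or `f ⊗ 𝟙`, so it is annihilated as soon as
the factor acting on the constant direction kills `𝟙`. -/

/-- Kronecker product of two square matrices, acting on vectors indexed by pairs of nodes. -/
def kron {ι κ : Type*} (A : Matrix ι ι ℝ) (B : Matrix κ κ ℝ) :
    Matrix (ι × κ) (ι × κ) ℝ :=
  fun pq rs => A pq.1 rs.1 * B pq.2 rs.2

section KronMulVec

variable {ι κ : Type*} [Fintype ι] [Fintype κ] (A : Matrix ι ι ℝ) (B : Matrix κ κ ℝ)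

theorem kron_mulVec_mul (f : ι → ℝ) (g : κ → ℝ) :
    (kron A B).mulVec (fun q => f q.1 * g q.2) =
      fun q => A.mulVec f q.1 * B.mulVec g q.2 := by
  funext q
  simp only [Matrix.mulVec, dotProduct, kron, Fintype.sum_prod_type, Finset.sum_mul_sum,
    mul_mul_mul_comm]

variable {A B}

theorem kron_mulVec_snd_eq_zero (hA : A.mulVec (fun _ => (1 : ℝ)) = 0) (g : κ → ℝ) :
    (kron A B).mulVec (fun q => g q.2) = 0 := by
  simpa [hA, Pi.zero_def] using kron_mulVec_mul A B (fun _ => 1) g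

theorem kron_mulVec_fst_eq_zero (hB : B.mulVec (fun _ => (1 : ℝ)) = 0) (f : ι → ℝ) :
    (kron A B).mulVec (fun q => f q.1) = 0 := by
  simpa [hB, Pi.zero_def] using kron_mulVec_mul A B f (fun _ => 1)

theorem kron_mulVec_fst_add_snd_eq_zero (hA : A.mulVec (fun _ => (1 : ℝ)) = 0)
    (hB : B.mulVec (fun _ => (1 : ℝ)) = 0) (f : ι → ℝ) (g : κ → ℝ) :
    (kron A B).mulVec (fun q => f q.1 + g q.2) = 0 := by
  rw [show (fun q : ι × κ => f q.1 + g q.2) = (fun q => f q.1) + (fun q => g q.2) from rfl,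
    Matrix.mulVec_add, kron_mulVec_fst_eq_zero hB, kron_mulVec_snd_eq_zero hA, add_zero]

end KronMulVec

theorem stmt9_general
    {ι κ : Type*} [Fintype ι] [Fintype κ] [DecidableEq ι] [DecidableEq κ]
    (Mx Dx : Matrix ι ι ℝ) (My Dy : Matrix κ κ ℝ)
    (hDx : Dx.mulVec (fun _ => (1 : ℝ)) = 0)
    (hDy : Dy.mulVec (fun _ => (1 : ℝ)) = 0)
    (pvec : ι × κ → ℝ)
    (U V Ku Kv Kp : ι × κ → ℝ)
    (fu : κ → ℝ) (hfu : ∀ q : ι × κ, pvec q - Ku q = fu q.2)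
    (fv : ι → ℝ) (hfv : ∀ q : ι × κ, pvec q - Kv q = fv q.1)
    (σx : ι → ℝ) (σy : κ → ℝ)
    (hσ : ∀ q : ι × κ, U q + V q - Kp q = σx q.1 + σy q.2) :
    (∀ (gx : ι → ℝ) (gy : κ → ℝ),
      (kron Dx Dy).mulVec (fun q => gx q.1 + gy q.2) = 0 ∧
      (kron Dx 1).mulVec (fun q => gy q.2) = 0 ∧
      (kron 1 Dy).mulVec (fun q => gx q.1) = 0) ∧
    (kron Dx My).mulVec (fun q => pvec q - Ku q) = 0 ∧
    (kron Mx Dy).mulVec (fun q => pvec q - Kv q) = 0 ∧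
    (kron Dx Dy).mulVec (fun q => U q + V q - Kp q) = 0 := by
  refine ⟨fun gx gy => ⟨kron_mulVec_fst_add_snd_eq_zero hDx hDy gx gy,
    kron_mulVec_snd_eq_zero hDx gy, kron_mulVec_fst_eq_zero hDy gx⟩, ?_, ?_, ?_⟩
  · rw [funext hfu]
    exact kron_mulVec_snd_eq_zero hDx fu
  · rw [funext hfv]
    exact kron_mulVec_fst_eq_zero hDy fv
  · rw [funext hσ]
    exact kron_mulVec_fst_add_snd_eq_zero hDx hDy σx σy

/-- Nodal data whose steady residuals are functions of one direction only lie in the kernel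
of the global-flux Galerkin spatial operator.  If `D_x 𝟙 = 0` and `D_y 𝟙 = 0`, then:
(i) for any `gx` depending only on the `x`-index and `gy` only on the `y`-index,
`(D_x ⊗ D_y)(gx + gy) = 0`, `(D_x ⊗ 1_y) gy = 0` and `(1_x ⊗ D_y) gx = 0`; and
(ii) any nodal data `(u, v, p)` with `p − K_u` depending only on `y`, `p − K_v` only on `x`,
and `U + V − K_p = σˣ + σʸ` satisfies
`(D_x ⊗ M_y)(p − K_u) = 0`, `(M_x ⊗ D_y)(p − K_v) = 0`, `(D_x ⊗ D_y)(U + V − K_p) = 0`,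
where `U = (1_x ⊗ I_y) u`, `V = (I_x ⊗ 1_y) v`, `K_u = (I_x ⊗ 1_y) S_u`,
`K_v = (1_x ⊗ I_y) S_v`, `K_p = (I_x ⊗ I_y) S_p`. -/
theorem stmt9
    {ι κ : Type*} [Fintype ι] [Fintype κ] [DecidableEq ι] [DecidableEq κ]
    (Mx Dx Ix : Matrix ι ι ℝ) (My Dy Iy : Matrix κ κ ℝ)
    (hDx : Dx.mulVec (fun _ => (1 : ℝ)) = 0)
    (hDy : Dy.mulVec (fun _ => (1 : ℝ)) = 0)
    (u v pvec Su Sv Sp : ι × κ → ℝ)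
    (U V Ku Kv Kp : ι × κ → ℝ)
    (hU : U = (kron 1 Iy).mulVec u)
    (hV : V = (kron Ix 1).mulVec v)
    (hKu : Ku = (kron Ix 1).mulVec Su)
    (hKv : Kv = (kron 1 Iy).mulVec Sv)
    (hKp : Kp = (kron Ix Iy).mulVec Sp)
    (fu : κ → ℝ) (hfu : ∀ q : ι × κ, pvec q - Ku q = fu q.2)
    (fv : ι → ℝ) (hfv : ∀ q : ι × κ, pvec q - Kv q = fv q.1)
    (σx : ι → ℝ) (σy : κ → ℝ)
    (hσ : ∀ q : ι × κ, U q + V q - Kp q = σx q.1 + σy q.2) :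
    (∀ (gx : ι → ℝ) (gy : κ → ℝ),
      (kron Dx Dy).mulVec (fun q => gx q.1 + gy q.2) = 0 ∧
      (kron Dx 1).mulVec (fun q => gy q.2) = 0 ∧
      (kron 1 Dy).mulVec (fun q => gx q.1) = 0) ∧
    (kron Dx My).mulVec (fun q => pvec q - Ku q) = 0 ∧
    (kron Mx Dy).mulVec (fun q => pvec q - Kv q) = 0 ∧
    (kron Dx Dy).mulVec (fun q => U q + V q - Kp q) = 0 :=
  stmt9_general Mx Dx My Dy hDx hDy pvec U V Ku Kv Kp fu hfu fv hfv σx σy hσ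
end

section
/- Let ℒ be a skew-adjoint operator on a real inner product space (⟨ℒa, b⟩ = −⟨a, ℒb⟩), S a fixed element, τ ≥ 0, and suppose Q(t) satisfies the SUPG-type variational identity ⟨w + τℒw, ∂_t Q + ℒQ − S⟩ = 0 for all test elements w, with the choice w = Q + τ∂_t Q − τS admissible. Then d/dt (½‖Q‖² + ½τ²‖ℒQ‖²) = ⟨Q, S⟩ + τ²⟨ℒS, ℒQ⟩ − τ‖∂_t Q + ℒQ − S‖² ≤ ⟨Q, S⟩ + τ²⟨ℒS, ℒQ⟩. -/
open RealInnerProductSpace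

/-! Testing the SUPG identity with `w = Q + τ (∂ₜQ − S)` and writing `R = ∂ₜQ + ℒQ − S`, the test
function becomes `w + τℒw = Q + τR + τ²ℒR − τ²ℒ²Q`. Skew-adjointness kills `⟪ℒR, R⟫`, `⟪Q, ℒQ⟫`
and `⟪ℒQ, ℒ²Q⟫` and turns `⟪ℒ²Q, R⟫` into `−⟪ℒQ, ℒR⟫`, so the identity says that
`⟪Q, ∂ₜQ⟫ + τ²⟪ℒQ, ℒ∂ₜQ⟫`, the time derivative of the energy, equals
`⟪Q, S⟫ + τ²⟪ℒS, ℒQ⟫ − τ‖R‖²`. -/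

section SkewAdjoint

variable {H : Type*} [NormedAddCommGroup H] [InnerProductSpace ℝ H] {L : H →L[ℝ] H}

theorem inner_self_map_eq_zero_of_skew (hL : ∀ a b : H, ⟪L a, b⟫ = -⟪a, L b⟫) (a : H) :
    ⟪a, L a⟫ = 0 := by
  linarith [hL a a, real_inner_comm a (L a)]

theorem inner_supg_test_residual_of_skew (hL : ∀ a b : H, ⟪L a, b⟫ = -⟪a, L b⟫)
    (q p S : H) (τ : ℝ) :
    ⟪(q + τ • p - τ • S) + τ • L (q + τ • p - τ • S), p + L q - S⟫
      = ⟪q, p⟫ + τ ^ 2 * ⟪L q, L p⟫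
        - (⟪q, S⟫ + τ ^ 2 * ⟪L S, L q⟫ - τ * ‖p + L q - S‖ ^ 2) := by
  set R := p + L q - S with hR
  have htest : (q + τ • p - τ • S) + τ • L (q + τ • p - τ • S)
      = q + τ • R + τ ^ 2 • L R - τ ^ 2 • L (L q) := by
    simp only [hR, map_add, map_sub, map_smul]
    module
  have hqR : ⟪q, R⟫ = ⟪q, p⟫ - ⟪q, S⟫ := by
    simp only [hR, inner_add_right, inner_sub_right, inner_self_map_eq_zero_of_skew hL q]
    ring
  have hLqLR : ⟪L q, L R⟫ = ⟪L q, L p⟫ - ⟪L S, L q⟫ := by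
    simp only [hR, map_add, map_sub, inner_add_right, inner_sub_right,
      inner_self_map_eq_zero_of_skew hL (L q), real_inner_comm (L S) (L q)]
    ring
  have hLRR : ⟪L R, R⟫ = 0 := by
    rw [real_inner_comm]
    exact inner_self_map_eq_zero_of_skew hL R
  rw [htest]
  simp only [inner_add_left, inner_sub_left, real_inner_smul_left, real_inner_self_eq_norm_sq,
    hL (L q) R, hqR, hLqLR, hLRR]
  ring

end SkewAdjoint

theorem HasDerivAt.half_norm_sq_add_map {H : Type*} [NormedAddCommGroup H]
    [InnerProductSpace ℝ H] (L : H →L[ℝ] H) (c : ℝ) {Q : ℝ → H} {Q' : H} {t : ℝ}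
    (hQ : HasDerivAt Q Q' t) :
    HasDerivAt (fun s => (1 / 2) * ‖Q s‖ ^ 2 + (1 / 2) * c * ‖L (Q s)‖ ^ 2)
      (⟪Q t, Q'⟫ + c * ⟪L (Q t), L Q'⟫) t := by
  have hLQ : HasDerivAt (fun s => L (Q s)) (L Q') t := L.hasFDerivAt.comp_hasDerivAt t hQ
  exact ((hQ.norm_sq.const_mul (1 / 2)).add (hLQ.norm_sq.const_mul (1 / 2 * c))).congr_deriv
    (by ring)

theorem stmt14_general
    {H : Type*} [NormedAddCommGroup H] [InnerProductSpace ℝ H]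
    (L : H →L[ℝ] H) (hL : ∀ a b : H, ⟪L a, b⟫ = -⟪a, L b⟫)
    (S : H) (τ : ℝ) (hτ : 0 ≤ τ)
    (Q Q' : ℝ → H) (hQ : ∀ t, HasDerivAt Q (Q' t) t)
    (hSUPG : ∀ t,
      ⟪(Q t + τ • Q' t - τ • S) + τ • L (Q t + τ • Q' t - τ • S),
        Q' t + L (Q t) - S⟫ = 0) :
    ∀ t : ℝ,
      HasDerivAt (fun s => (1 / 2) * ‖Q s‖ ^ 2 + (1 / 2) * τ ^ 2 * ‖L (Q s)‖ ^ 2)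
        (⟪Q t, S⟫ + τ ^ 2 * ⟪L S, L (Q t)⟫ - τ * ‖Q' t + L (Q t) - S‖ ^ 2) t ∧
      ⟪Q t, S⟫ + τ ^ 2 * ⟪L S, L (Q t)⟫ - τ * ‖Q' t + L (Q t) - S‖ ^ 2
        ≤ ⟪Q t, S⟫ + τ ^ 2 * ⟪L S, L (Q t)⟫ := by
  intro t
  have henergy : ⟪Q t, Q' t⟫ + τ ^ 2 * ⟪L (Q t), L (Q' t)⟫
      = ⟪Q t, S⟫ + τ ^ 2 * ⟪L S, L (Q t)⟫ - τ * ‖Q' t + L (Q t) - S‖ ^ 2 := by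
    linarith [hSUPG t, inner_supg_test_residual_of_skew hL (Q t) (Q' t) S τ]
  refine ⟨henergy ▸ (hQ t).half_norm_sq_add_map L (τ ^ 2), ?_⟩
  have : 0 ≤ τ * ‖Q' t + L (Q t) - S‖ ^ 2 := by positivity
  linarith

/-- Abstract energy estimate for the SUPG-stabilized scheme: if `ℒ` is skew-adjoint,
`τ ≥ 0`, and `Q` satisfies the SUPG variational identity tested with
`w = Q + τ ∂_t Q − τ S`, then
`d/dt (½‖Q‖² + ½τ²‖ℒQ‖²) = ⟨Q,S⟩ + τ²⟨ℒS,ℒQ⟩ − τ‖∂_t Q + ℒQ − S‖²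
  ≤ ⟨Q,S⟩ + τ²⟨ℒS,ℒQ⟩`. -/
theorem stmt14
    {H : Type*} [NormedAddCommGroup H] [InnerProductSpace ℝ H]
    (L : H →L[ℝ] H) (hL : ∀ a b : H, ⟪L a, b⟫ = -⟪a, L b⟫)
    (S : H) (τ : ℝ) (hτ : 0 ≤ τ)
    (Q Q' : ℝ → H) (hQ : ∀ t, HasDerivAt Q (Q' t) t)
    (hQ' : Continuous Q')
    (hSUPG : ∀ t,
      ⟪(Q t + τ • Q' t - τ • S) + τ • L (Q t + τ • Q' t - τ • S),
        Q' t + L (Q t) - S⟫ = 0) :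
    ∀ t : ℝ,
      HasDerivAt (fun s => (1 / 2) * ‖Q s‖ ^ 2 + (1 / 2) * τ ^ 2 * ‖L (Q s)‖ ^ 2)
        (⟪Q t, S⟫ + τ ^ 2 * ⟪L S, L (Q t)⟫ - τ * ‖Q' t + L (Q t) - S‖ ^ 2) t ∧
      ⟪Q t, S⟫ + τ ^ 2 * ⟪L S, L (Q t)⟫ - τ * ‖Q' t + L (Q t) - S‖ ^ 2
        ≤ ⟪Q t, S⟫ + τ ^ 2 * ⟪L S, L (Q t)⟫ :=
  stmt14_general L hL S τ hτ Q Q' hQ hSUPG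
end

section
/- Let ℒ be a skew-adjoint operator on a real inner product space H, S ∈ H, τ ≥ 0. Suppose Q(t), Π(t) ∈ H satisfy the OSS variational identities ⟨w, ∂_t Q + ℒQ − S⟩ + τ⟨ℒw, ℒQ − S − Π⟩ = 0 and ⟨w, Π − (ℒQ − S)⟩ = 0 for all w ∈ H. Then d/dt (½‖Q‖²) = ⟨Q, S⟩ − τ‖ℒQ − S − Π‖² ≤ ⟨Q, S⟩. -/
/-!
Testing the second identity with its own residual shows `Pp = ℒQ - S`, so the stabilisation term
of the first identity vanishes. Testing the first identity with `w = Q` and using `⟪Q, ℒQ⟫ = 0`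
(skew-adjointness) gives `⟪Q, Q'⟫ = ⟪Q, S⟫`, which is the derivative of `½‖Q‖²`.
-/

open RealInnerProductSpace

section Skew

variable {H : Type*} [NormedAddCommGroup H] [InnerProductSpace ℝ H]
  {L : H → H} (hL : ∀ a b : H, ⟪L a, b⟫ = -⟪a, L b⟫)
include hL

theorem inner_self_apply_eq_zero_of_skew (a : H) : ⟪a, L a⟫ = 0 := by
  have h := hL a a
  rw [real_inner_comm] at h
  linarith

theorem inner_eq_sub_mul_norm_sq_of_oss {S q q' p : H} {τ : ℝ}
    (h₁ : ∀ w : H, ⟪w, q' + L q - S⟫ + τ * ⟪L w, L q - S - p⟫ = 0)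
    (h₂ : ∀ w : H, ⟪w, p - (L q - S)⟫ = 0) :
    ⟪q, q'⟫ = ⟪q, S⟫ - τ * ‖L q - S - p‖ ^ 2 := by
  have hp : p = L q - S := sub_eq_zero.mp (inner_self_eq_zero.mp (h₂ _))
  have h := h₁ q
  rw [hp, sub_self, inner_zero_right, mul_zero, add_zero, inner_sub_right, inner_add_right,
    inner_self_apply_eq_zero_of_skew hL] at h
  rw [hp, sub_self, norm_zero]
  linarith

end Skew

/-- Abstract energy estimate for the OSS-stabilized scheme: if `ℒ` is skew-adjoint, `τ ≥ 0`,
and `Q, Pp` satisfy the OSS variational identities for all test elements `w`, then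
`d/dt (½‖Q‖²) = ⟨Q,S⟩ − τ‖ℒQ − S − Pp‖² ≤ ⟨Q,S⟩`. -/
theorem stmt15
    {H : Type*} [NormedAddCommGroup H] [InnerProductSpace ℝ H]
    (L : H →L[ℝ] H) (hL : ∀ a b : H, ⟪L a, b⟫ = -⟪a, L b⟫)
    (S : H) (τ : ℝ) (hτ : 0 ≤ τ)
    (Q Q' Pp : ℝ → H) (hQ : ∀ t, HasDerivAt Q (Q' t) t)
    (hOSS₁ : ∀ t, ∀ w : H,
      ⟪w, Q' t + L (Q t) - S⟫ + τ * ⟪L w, L (Q t) - S - Pp t⟫ = 0)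
    (hOSS₂ : ∀ t, ∀ w : H, ⟪w, Pp t - (L (Q t) - S)⟫ = 0) :
    ∀ t : ℝ,
      HasDerivAt (fun s => (1 / 2) * ‖Q s‖ ^ 2)
        (⟪Q t, S⟫ - τ * ‖L (Q t) - S - Pp t‖ ^ 2) t ∧
      ⟪Q t, S⟫ - τ * ‖L (Q t) - S - Pp t‖ ^ 2 ≤ ⟪Q t, S⟫ := by
  intro t
  have energy := inner_eq_sub_mul_norm_sq_of_oss hL (hOSS₁ t) (hOSS₂ t)
  refine ⟨?_, sub_le_self _ (mul_nonneg hτ (sq_nonneg _))⟩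
  rw [← energy]
  exact ((hQ t).norm_sq.const_mul (1 / 2)).congr_deriv (by ring)
end
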